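/- Let C(i,j) be the Catalan triangle numbers. Then the double series Σ_{n=1}^∞ Σ_{i=0}^{n-1} Σ_{j=1}^{n-i} C(n-i,j)/4^{n-i} · a_{i,j}, for any summable nonnegative double array (a_{i,j}), can be reindexed as Σ_{i=0}^∞ Σ_{j=1}^∞ (Σ_{l=j}^∞ C(l,j)/4^l) a_{i,j} = Σ_{i=0}^∞ Σ_{j=1}^∞ a_{i,j}/2^j. -/

import Mathlib

/-!
Write `T j = ∑ l, C(l, j) / 4 ^ l`. The recursion forces the ballot numbers
`C(u + 1, u + 1 - v) = (u + v).choose u - (u + v).choose (u + 1)`, so `C(u + 1, 1)` is the `u`-th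
Catalan number and `C(u + 1, 1) / 4 ^ (u + 1)` telescopes: `T 1 = 1 / 2`, because
`(2u).choose u / 4 ^ u → 0`. Summed over `l`, the recursion gives `T 2 = T 1 - 1 / 4` and
`T (j + 2) = T (j + 1) - T j / 4`, hence `T j = 1 / 2 ^ j`. As all terms are nonnegative, the triple
series of `C(l, j) / 4 ^ l * a i j` may be summed first over `l`, or first over `j` and then along
the antidiagonals `i + l = n`.
-/

open Finset Filter Topology

noncomputable def ballot (u v : ℕ) : ℝ := ((u + v).choose u : ℝ) - (u + v).choose (u + 1)

theorem ballot_zero_right (u : ℕ) : ballot u 0 = 1 := by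
  simp [ballot, Nat.choose_succ_self]

theorem ballot_succ_self (u : ℕ) : ballot u (u + 1) = 0 := by
  rw [ballot, show u + (u + 1) = 2 * u + 1 by ring, Nat.choose_symm_half, sub_self]

theorem ballot_succ_succ (u v : ℕ) :
    ballot (u + 1) (v + 1) = ballot u (v + 1) + ballot (u + 1) v := by
  simp only [ballot, show u + 1 + (v + 1) = u + v + 1 + 1 by ring,
    show u + (v + 1) = u + v + 1 by ring, show u + 1 + v = u + v + 1 by ring, Nat.choose_succ_succ]
  push_cast
  ring

theorem ballot_nonneg {u v : ℕ} (h : v ≤ u + 1) : 0 ≤ ballot u v := by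
  rw [ballot, sub_nonneg, Nat.cast_le]
  have hsucc := Nat.choose_succ_right_eq (u + v) u
  rw [Nat.add_sub_cancel_left] at hsucc
  exact Nat.le_of_mul_le_mul_right (hsucc.trans_le (Nat.mul_le_mul_left _ h)) u.succ_pos

theorem two_mul_ballot_self (u : ℕ) :
    2 * ballot u u = 4 * (u.centralBinom : ℝ) - (u + 1).centralBinom := by
  have h : (u + 1).centralBinom = 2 * ((2 * u).choose u + (2 * u).choose (u + 1)) := by
    rw [Nat.centralBinom, show 2 * (u + 1) = 2 * u + 1 + 1 by ring, Nat.choose_succ_succ,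
      ← Nat.choose_symm_half, Nat.choose_succ_succ]
    ring
  rw [ballot, ← two_mul, Nat.centralBinom_eq_two_mul_choose, h]
  push_cast
  ring

theorem sq_centralBinom_div_four_pow_le (n : ℕ) :
    ((n.centralBinom : ℝ) / 4 ^ n) ^ 2 ≤ 1 / (n + 1) := by
  induction n with
  | zero => simp
  | succ n ih =>
    have hstep : ((n + 1).centralBinom : ℝ) / 4 ^ (n + 1) =
        n.centralBinom / 4 ^ n * ((2 * n + 1) / (2 * n + 2)) := by
      have h : ((n + 1 : ℕ) : ℝ) * (n + 1).centralBinom = 2 * (2 * n + 1) * n.centralBinom := by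
        exact_mod_cast Nat.succ_mul_centralBinom_succ n
      field_simp
      rw [pow_succ]
      push_cast at h
      linear_combination (2 * 4 ^ n) * h
    rw [hstep, mul_pow]
    calc _ ≤ 1 / (n + 1) * ((2 * n + 1) / (2 * n + 2) : ℝ) ^ 2 := by gcongr
      _ ≤ 1 / ((n + 1 : ℕ) + 1) := by
        rw [div_pow, div_mul_div_comm, div_le_div_iff₀ (by positivity) (by positivity)]
        push_cast
        nlinarith

theorem tendsto_centralBinom_div_four_pow :
    Tendsto (fun n : ℕ => (n.centralBinom : ℝ) / 4 ^ n) atTop (𝓝 0) := by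
  have hsq : Tendsto (fun n : ℕ => ((n.centralBinom : ℝ) / 4 ^ n) ^ 2) atTop (𝓝 0) :=
    squeeze_zero (fun n => by positivity) sq_centralBinom_div_four_pow_le
      tendsto_one_div_add_atTop_nhds_zero_nat
  have hsqrt := hsq.sqrt
  rw [Real.sqrt_zero] at hsqrt
  exact hsqrt.congr fun n => Real.sqrt_sq (by positivity)

theorem hasSum_sub_succ_of_antitone {b : ℕ → ℝ} {L : ℝ} (hb : Antitone b)
    (hL : Tendsto b atTop (𝓝 L)) : HasSum (fun n => b n - b (n + 1)) (b 0 - L) := by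
  rw [hasSum_iff_tendsto_nat_of_nonneg fun n => sub_nonneg.2 (hb n.le_succ)]
  simp_rw [Finset.sum_range_sub']
  exact hL.const_sub _

structure IsCatalanTriangle (C : ℕ → ℕ → ℝ) : Prop where
  one_one : C 1 1 = 1
  zero_right : ∀ i, C i 0 = 0
  eq_zero_of_lt : ∀ i j, i < j → C i j = 0
  eq_add : ∀ i j, 1 ≤ j → j ≤ i → (i, j) ≠ (1, 1) →
    C i j = C (i - 1) (j - 1) + C i (j + 1)

namespace IsCatalanTriangle

variable {C : ℕ → ℕ → ℝ}

theorem eq_ballot (hC : IsCatalanTriangle C) {u v : ℕ} (h : v ≤ u + 1) :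
    C (u + 1) (u + 1 - v) = ballot u v := by
  induction u generalizing v with
  | zero =>
    interval_cases v
    · simpa [ballot_zero_right] using hC.one_one
    · simpa [ballot_succ_self] using hC.zero_right 1
  | succ u ihu =>
    induction v with
    | zero =>
      have h := hC.eq_add (u + 2) (u + 2) (by omega) le_rfl (by simp)
      rw [hC.eq_zero_of_lt (u + 2) (u + 2 + 1) (by omega), add_zero] at h
      simpa [ballot_zero_right, h] using ihu (v := 0)
    | succ v ihv =>
      rcases (show v ≤ u ∨ v = u + 1 by omega) with hv | rfl
      · rw [hC.eq_add _ _ (by omega) (by omega) (by simp), ballot_succ_succ,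
          show u + 1 + 1 - 1 = u + 1 by omega,
          show u + 1 + 1 - (v + 1) - 1 = u + 1 - (v + 1) by omega,
          show u + 1 + 1 - (v + 1) + 1 = u + 1 + 1 - v by omega, ihu (by omega), ihv (by omega)]
      · rw [Nat.sub_self, hC.zero_right, ballot_succ_self]

theorem nonneg (hC : IsCatalanTriangle C) (i j : ℕ) : 0 ≤ C i j := by
  rcases Nat.eq_zero_or_pos j with rfl | hj
  · rw [hC.zero_right]
  rcases lt_or_ge i j with hij | hji
  · rw [hC.eq_zero_of_lt i j hij]
  obtain ⟨u, rfl⟩ : ∃ u, i = u + 1 := ⟨i - 1, by omega⟩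
  have h := hC.eq_ballot (u := u) (v := u + 1 - j) (by omega)
  rw [show u + 1 - (u + 1 - j) = j by omega] at h
  exact h ▸ ballot_nonneg (by omega)

theorem succ_one (hC : IsCatalanTriangle C) (u : ℕ) : C (u + 1) 1 = ballot u u := by
  simpa using hC.eq_ballot (u := u) (v := u) (by omega)

theorem succ_add_two (hC : IsCatalanTriangle C) (l j : ℕ) :
    C (l + 1) (j + 2) = C l (j + 1) + C (l + 1) (j + 3) := by
  rcases le_or_gt (j + 2) (l + 1) with h | h
  · simpa using hC.eq_add (l + 1) (j + 2) (by omega) h (by simp)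
  · rw [hC.eq_zero_of_lt _ _ h, hC.eq_zero_of_lt l (j + 1) (by omega),
      hC.eq_zero_of_lt (l + 1) (j + 3) (by omega), add_zero]

theorem two_right (hC : IsCatalanTriangle C) (l : ℕ) :
    C l 2 = C l 1 - if l = 1 then 1 else 0 := by
  match l with
  | 0 => simp [hC.eq_zero_of_lt 0 1, hC.eq_zero_of_lt 0 2]
  | 1 => simp [hC.one_one, hC.eq_zero_of_lt 1 2]
  | l + 2 => simp [hC.eq_add (l + 2) 1 le_rfl (by omega) (by simp), hC.zero_right]

theorem hasSum_one_right (hC : IsCatalanTriangle C) :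
    HasSum (fun l => C l 1 / 4 ^ l) (1 / 2) := by
  set b : ℕ → ℝ := fun n => n.centralBinom / 4 ^ n
  have hterm : ∀ u, C (u + 1) 1 / 4 ^ (u + 1) = (b u - b (u + 1)) / 2 := by
    intro u
    rw [hC.succ_one]
    have h := two_mul_ballot_self u
    simp only [b]
    field_simp
    rw [pow_succ]
    linear_combination (4 ^ u : ℝ) * h
  have hb : Antitone b := antitone_nat_of_succ_le fun u => by
    have h := hterm u ▸ div_nonneg (hC.nonneg (u + 1) 1) (pow_nonneg zero_le_four (u + 1))
    linarith
  rw [← hasSum_nat_add_iff' 1]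
  simpa [hterm, b, hC.eq_zero_of_lt 0 1] using
    (hasSum_sub_succ_of_antitone hb tendsto_centralBinom_div_four_pow).div_const 2

theorem hasSum_succ_right (hC : IsCatalanTriangle C) (j : ℕ) :
    HasSum (fun l => C l (j + 1) / 4 ^ l) (1 / 2 ^ (j + 1)) := by
  induction j using Nat.twoStepInduction with
  | zero => simpa using hC.hasSum_one_right
  | one =>
    have h := hC.hasSum_one_right.sub (hasSum_ite_eq 1 (1 / 4 : ℝ))
    rw [show (1 : ℝ) / 2 ^ (1 + 1) = 1 / 2 - 1 / 4 by norm_num]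
    refine h.congr_fun fun l => ?_
    rw [hC.two_right]
    split_ifs with hl
    · subst hl; ring
    · simp
  | more j h₀ h₁ =>
    show HasSum (fun l => C l (j + 3) / 4 ^ l) (1 / 2 ^ (j + 3))
    replace h₁ : HasSum (fun l => C l (j + 2) / 4 ^ l) (1 / 2 ^ (j + 2)) := h₁
    rw [← hasSum_nat_add_iff' 1] at h₁ ⊢
    convert h₁.sub (h₀.div_const 4) using 1
    · ext l
      linear_combination -hC.succ_add_two l j / 4 ^ (l + 1)
    · simp only [Finset.sum_range_one, pow_zero, div_one, hC.eq_zero_of_lt 0 (j + 2) (by omega),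
        hC.eq_zero_of_lt 0 (j + 3) (by omega), sub_zero]
      ring

end IsCatalanTriangle

theorem HasSum.prod_of_nonneg {β γ : Type*} {f : β × γ → ℝ} {g : β → ℝ} {a : ℝ}
    (hg : HasSum g a) (hf : 0 ≤ f) (hfg : ∀ b, HasSum (fun c => f (b, c)) (g b)) :
    HasSum f a := by
  have hs : Summable f := (summable_prod_of_nonneg hf).2
    ⟨fun b => (hfg b).summable, hg.summable.congr fun b => ((hfg b).tsum_eq).symm⟩
  exact (hs.hasSum.prod_fiberwise hfg).unique hg ▸ hs.hasSum

theorem HasSum.sum_antidiagonal {α A : Type*} [AddCommMonoid α] [TopologicalSpace α]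
    [ContinuousAdd α] [RegularSpace α] [AddCommMonoid A] [HasAntidiagonal A]
    {f : A × A → α} {a : α}
    (h : HasSum f a) : HasSum (fun n => ∑ p ∈ antidiagonal n, f p) a :=
  (HasAntidiagonal.sigmaAntidiagonalEquivProd.hasSum_iff.2 h).sigma fun n =>
    (antidiagonal n).hasSum f

theorem hasSum_comp_succ_of_eq_zero {α : Type*} [AddCommMonoid α] [TopologicalSpace α]
    {f : ℕ → α} {n : ℕ} (hf : ∀ j, n < j → f j = 0) :
    HasSum (fun j => f (j + 1)) (∑ j ∈ Icc 1 n, f j) := by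
  rw [← Finset.Ico_add_one_right_eq_Icc, Finset.sum_Ico_eq_sum_range, Nat.add_sub_cancel]
  simp_rw [add_comm 1]
  exact hasSum_sum_of_ne_finset_zero fun j hj => hf _ (by simpa using hj)

/-- Reindexing the triple series: Σ_{n=1}^∞ Σ_{i=0}^{n-1} Σ_{j=1}^{n-i}
C(n-i,j)/4^{n-i} · a_{i,j} = Σ_{i=0}^∞ Σ_{j=1}^∞ a_{i,j}/2^j for a summable
nonnegative array a, using Σ_{l=j}^∞ C(l,j)/4^l = 1/2^j. -/
theorem catalan_triangle_reindexed_sum (C : ℕ → ℕ → ℝ)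
    (h11 : C 1 1 = 1)
    (h0 : ∀ i, C i 0 = 0)
    (hgt : ∀ i j, i < j → C i j = 0)
    (hrec : ∀ i j, 1 ≤ j → j ≤ i → (i, j) ≠ (1, 1) →
      C i j = C (i - 1) (j - 1) + C i (j + 1))
    (a : ℕ → ℕ → ℝ) (ha : ∀ i j, 0 ≤ a i j)
    (hsum : Summable (fun p : ℕ × ℕ => a p.1 (p.2 + 1) / 2 ^ (p.2 + 1))) :
    HasSum (fun m : ℕ => ∑ i ∈ Finset.range (m + 1), ∑ j ∈ Finset.Icc 1 (m + 1 - i),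
        C (m + 1 - i) j / 4 ^ (m + 1 - i) * a i j)
      (∑' p : ℕ × ℕ, a p.1 (p.2 + 1) / 2 ^ (p.2 + 1)) := by
  have hC : IsCatalanTriangle C := ⟨h11, h0, hgt, hrec⟩
  set S := ∑' p : ℕ × ℕ, a p.1 (p.2 + 1) / 2 ^ (p.2 + 1)
  have hlij : HasSum
      (fun q : (ℕ × ℕ) × ℕ => C q.2 (q.1.2 + 1) / 4 ^ q.2 * a q.1.1 (q.1.2 + 1)) S := by
    refine hsum.hasSum.prod_of_nonneg
      (fun q => mul_nonneg (div_nonneg (hC.nonneg _ _) (by positivity)) (ha _ _)) fun p => ?_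
    simpa only [one_div, inv_mul_eq_div] using
      (hC.hasSum_succ_right p.2).mul_right (a p.1 (p.2 + 1))
  let swap : (ℕ × ℕ) × ℕ ≃ (ℕ × ℕ) × ℕ :=
    ⟨fun q => ((q.1.1, q.2), q.1.2), fun q => ((q.1.1, q.2), q.1.2), fun _ => rfl, fun _ => rfl⟩
  have hilj : HasSum
      (fun q : (ℕ × ℕ) × ℕ => C q.1.2 (q.2 + 1) / 4 ^ q.1.2 * a q.1.1 (q.2 + 1)) S :=
    swap.hasSum_iff.1 hlij
  have hil : HasSum (fun p : ℕ × ℕ => ∑ j ∈ Icc 1 p.2, C p.2 j / 4 ^ p.2 * a p.1 j) S :=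
    hilj.prod_fiberwise fun p => hasSum_comp_succ_of_eq_zero fun j hj => by
      rw [hgt _ _ hj, zero_div, zero_mul]
  have hn := (hasSum_nat_add_iff' 1).2 hil.sum_antidiagonal
  simp only [Finset.Nat.sum_antidiagonal_eq_sum_range_succ_mk, Finset.sum_range_succ _ (_ + 1),
    Nat.sub_self] at hn
  simpa using hn
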